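/- Suppose the Markov kernel P satisfies PE(V, c, α, b, C). Then for every x ∉ C, the expected first return time to C satisfies 𝔼_x[τ_C] ≤ V(x)^{1−α} / (c(1−α)). -/

import Mathlib

open MeasureTheory ProbabilityTheory ENNReal Set

/-- The σ-algebra on path space `ℕ → 𝓧` generated by the coordinates `0, …, n`. -/
def pathFiltration (𝓧 : Type*) [MeasurableSpace 𝓧] (n : ℕ) : MeasurableSpace (ℕ → 𝓧) :=
  MeasurableSpace.comap (fun ω (i : Fin (n + 1)) => ω i) inferInstance

/-- `μ : 𝓧 → Measure (ℕ → 𝓧)` is the family of trajectory laws of the time-homogeneous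
Markov chain with transition kernel `P`. -/
def IsMarkovTrajectory {𝓧 : Type*} [MeasurableSpace 𝓧]
    (P : ProbabilityTheory.Kernel 𝓧 𝓧) (μ : 𝓧 → Measure (ℕ → 𝓧)) : Prop :=
  (∀ x, IsProbabilityMeasure (μ x)) ∧
  (∀ x, μ x {ω | ω 0 = x} = 1) ∧
  (∀ x (n : ℕ) (A : Set (ℕ → 𝓧)), MeasurableSet[pathFiltration 𝓧 n] A →
    ∀ f : 𝓧 → ℝ≥0∞, Measurable f →
      ∫⁻ ω in A, f (ω (n + 1)) ∂(μ x) = ∫⁻ ω in A, (∫⁻ y, f y ∂(P (ω n))) ∂(μ x))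

/-- First return time to `C`: `τ_C = inf{n ≥ 1 : X_n ∈ C}` (equal to `∞` if `C` is
never entered at a positive time). -/
noncomputable def returnTime {𝓧 : Type*} (C : Set 𝓧) (ω : ℕ → 𝓧) : ℕ∞ :=
  ⨅ (n : ℕ) (_ : 1 ≤ n ∧ ω n ∈ C), (n : ℕ∞)

/-!
Since `t ↦ t ^ (1 - α)` is concave, the tangent-line bound at `V z` turns the drift
`PV ≤ V - c V ^ α` off `C` into `PW + 1 ≤ W` for `W = V ^ (1 - α) / (c (1 - α))`.
Along the chain stopped at its return to `C`, `W (X_n)` then loses at least one unit per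
step in expectation, and summing the tail probabilities `ℙ_x(τ_C > n)` of the return time
bounds `𝔼_x[τ_C]` by `W x`.
-/

theorem rpow_one_sub_le_tangent {α t v : ℝ} (hα0 : 0 ≤ α) (hα1 : α ≤ 1) (ht : 0 < t)
    (hv : 0 ≤ v) : v ^ (1 - α) ≤ α * t ^ (1 - α) + (1 - α) * t ^ (-α) * v := by
  have amgm : v ^ (1 - α) * t ^ α ≤ (1 - α) * v + α * t :=
    Real.geom_mean_le_arith_mean2_weighted (sub_nonneg.2 hα1) hα0 hv ht.le (by ring)
  have hcancel : t ^ α * t ^ (-α) = 1 := by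
    rw [← Real.rpow_add ht, add_neg_cancel, Real.rpow_zero]
  have hsplit : t ^ (1 - α) = t * t ^ (-α) := by
    rw [sub_eq_add_neg, Real.rpow_add ht, Real.rpow_one]
  calc v ^ (1 - α) = v ^ (1 - α) * t ^ α * t ^ (-α) := by rw [mul_assoc, hcancel, mul_one]
    _ ≤ ((1 - α) * v + α * t) * t ^ (-α) := by gcongr
    _ = α * t ^ (1 - α) + (1 - α) * t ^ (-α) * v := by rw [hsplit]; ring

theorem lintegral_rpow_div_add_one_le {Ω : Type*} [MeasurableSpace Ω] (ν : Measure Ω)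
    [IsProbabilityMeasure ν] {V : Ω → ℝ} (hV : Measurable V) (hV0 : ∀ y, 0 ≤ V y)
    {c α t : ℝ} (hc : 0 < c) (hα : α ∈ Ioo (0 : ℝ) 1) (ht : 0 < t) (hct : c * t ^ α ≤ t)
    (hdrift : ∫⁻ y, ENNReal.ofReal (V y) ∂ν ≤ ENNReal.ofReal (t - c * t ^ α)) :
    ∫⁻ y, ENNReal.ofReal (V y ^ (1 - α) / (c * (1 - α))) ∂ν + 1
      ≤ ENNReal.ofReal (t ^ (1 - α) / (c * (1 - α))) := by
  obtain ⟨hα0, hα1⟩ := hα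
  have hcα : 0 < c * (1 - α) := mul_pos hc (sub_pos.2 hα1)
  set A := α * t ^ (1 - α) / (c * (1 - α))
  set B := t ^ (-α) / c
  have hA : 0 ≤ A := by positivity
  have hB : 0 ≤ B := by positivity
  have tangent : ∀ y, ENNReal.ofReal (V y ^ (1 - α) / (c * (1 - α)))
      ≤ ENNReal.ofReal A + ENNReal.ofReal B * ENNReal.ofReal (V y) := by
    intro y
    rw [← ENNReal.ofReal_mul hB, ← ENNReal.ofReal_add hA (mul_nonneg hB (hV0 y))]
    refine ENNReal.ofReal_le_ofReal ((div_le_iff₀ hcα).2 ?_)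
    calc V y ^ (1 - α) ≤ α * t ^ (1 - α) + (1 - α) * t ^ (-α) * V y :=
          rpow_one_sub_le_tangent hα0.le hα1.le ht (hV0 y)
      _ = (A + B * V y) * (c * (1 - α)) := by simp only [A, B]; field_simp
  have hmean : A + B * (t - c * t ^ α) = t ^ (1 - α) / (c * (1 - α)) - 1 := by
    have h1 : t ^ (-α) * t = t ^ (1 - α) := by
      rw [sub_eq_neg_add, Real.rpow_add ht, Real.rpow_one]
    have h2 : t ^ (-α) * t ^ α = 1 := by
      rw [← Real.rpow_add ht, neg_add_cancel, Real.rpow_zero]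
    simp only [A, B]
    field_simp
    linear_combination (1 - α) * h1 - (1 - α) * c * h2
  have hgap : 0 ≤ B * (t - c * t ^ α) := mul_nonneg hB (sub_nonneg.2 hct)
  calc ∫⁻ y, ENNReal.ofReal (V y ^ (1 - α) / (c * (1 - α))) ∂ν + 1
      ≤ ENNReal.ofReal A + ENNReal.ofReal B * ∫⁻ y, ENNReal.ofReal (V y) ∂ν + 1 := by
        gcongr
        calc _ ≤ ∫⁻ y, ENNReal.ofReal A + ENNReal.ofReal B * ENNReal.ofReal (V y) ∂ν :=
              lintegral_mono tangent
          _ = _ := by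
              rw [lintegral_add_left measurable_const,
                lintegral_const_mul _ hV.ennreal_ofReal, lintegral_const, measure_univ, mul_one]
    _ ≤ ENNReal.ofReal A + ENNReal.ofReal B * ENNReal.ofReal (t - c * t ^ α) + 1 := by
        gcongr
    _ = ENNReal.ofReal (t ^ (1 - α) / (c * (1 - α))) := by
        rw [← ENNReal.ofReal_mul hB, ← ENNReal.ofReal_add hA hgap, ← ENNReal.ofReal_one,
          ← ENNReal.ofReal_add (add_nonneg hA hgap) zero_le_one, hmean, sub_add_cancel]

theorem ENat.toENNReal_eq_tsum_ite_lt (k : ℕ∞) :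
    (k : ℝ≥0∞) = ∑' n : ℕ, if (n : ℕ∞) < k then 1 else 0 := by
  induction k using ENat.recTopCoe with
  | top => simp
  | coe m =>
    rw [tsum_eq_sum (s := Finset.range m) (fun n hn => by simpa using hn),
      Finset.sum_ite_of_true (fun n hn => by simpa using hn)]
    simp

theorem lintegral_toENNReal_eq_tsum_measure_lt {Ω : Type*} [MeasurableSpace Ω] (μ : Measure Ω)
    {f : Ω → ℕ∞} (hf : ∀ n : ℕ, MeasurableSet {ω | (n : ℕ∞) < f ω}) :
    ∫⁻ ω, (f ω : ℝ≥0∞) ∂μ = ∑' n : ℕ, μ {ω | (n : ℕ∞) < f ω} := by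
  have hpt : ∀ ω, (f ω : ℝ≥0∞) = ∑' n : ℕ, {ω | (n : ℕ∞) < f ω}.indicator 1 ω := by
    intro ω
    rw [ENat.toENNReal_eq_tsum_ite_lt]
    simp only [indicator, mem_ofPred_eq, Pi.one_apply]
  simp_rw [hpt]
  rw [lintegral_tsum fun n => (measurable_one.indicator (hf n)).aemeasurable]
  simp_rw [lintegral_indicator_one (hf _)]

section ReturnTime

variable {𝓧 : Type*}

theorem lt_returnTime_iff {C : Set 𝓧} {ω : ℕ → 𝓧} {n : ℕ} :
    (n : ℕ∞) < returnTime C ω ↔ ∀ k, 1 ≤ k → k ≤ n → ω k ∉ C := by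
  rw [← ENat.add_one_le_iff (ENat.natCast_ne_top n), returnTime, le_iInf₂_iff]
  constructor
  · intro h k hk1 hkn hkC
    have := h k ⟨hk1, hkC⟩
    norm_cast at this
    omega
  · rintro h m ⟨hm1, hmC⟩
    norm_cast
    by_contra hmn
    exact h m hm1 (by omega) hmC

variable [MeasurableSpace 𝓧]

theorem pathFiltration_le (n : ℕ) : pathFiltration 𝓧 n ≤ MeasurableSpace.pi :=
  (measurable_pi_lambda (fun (ω : ℕ → 𝓧) (i : Fin (n + 1)) => ω i) fun _ =>
    measurable_pi_apply _).comap_le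

theorem measurableSet_lt_returnTime {C : Set 𝓧} (hC : MeasurableSet C) (n : ℕ) :
    MeasurableSet[pathFiltration 𝓧 n] {ω | (n : ℕ∞) < returnTime C ω} := by
  have hcoord : ∀ k ≤ n, Measurable[pathFiltration 𝓧 n] fun ω : ℕ → 𝓧 => ω k := fun k hk =>
    (measurable_pi_apply (⟨k, by omega⟩ : Fin (n + 1))).comp
      (comap_measurable fun (ω : ℕ → 𝓧) (i : Fin (n + 1)) => ω i)
  simp only [lt_returnTime_iff, ofPred_forall]
  exact MeasurableSet.iInter fun k => MeasurableSet.iInter fun _ =>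
    MeasurableSet.iInter fun hk => hcoord k hk hC.compl

end ReturnTime

namespace IsMarkovTrajectory

variable {𝓧 : Type*} [MeasurableSpace 𝓧] {P : Kernel 𝓧 𝓧} {μ : 𝓧 → Measure (ℕ → 𝓧)}

-- `{ω | ω 0 = x}` need not be measurable, so this goes through measurable sets containing it.
theorem ae_zero_mem (hμ : IsMarkovTrajectory P μ) {D : Set 𝓧} (hD : MeasurableSet D)
    {x : 𝓧} (hx : x ∈ D) : ∀ᵐ ω ∂μ x, ω 0 ∈ D := by
  have := hμ.1 x
  have hT : MeasurableSet {ω : ℕ → 𝓧 | ω 0 ∉ D} := hD.compl.preimage (measurable_pi_apply 0)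
  refine ae_iff.2 ((prob_compl_eq_one_iff hT).1 (le_antisymm prob_le_one ?_))
  calc (1 : ℝ≥0∞) = μ x {ω | ω 0 = x} := (hμ.2.1 x).symm
    _ ≤ μ x {ω | ω 0 ∉ D}ᶜ := measure_mono fun ω (hω : ω 0 = x) => by simpa [hω] using hx

theorem measure_lt_returnTime_add_le (hμ : IsMarkovTrajectory P μ) {C : Set 𝓧}
    (hC : MeasurableSet C) {W : 𝓧 → ℝ≥0∞} (hW : Measurable W)
    (hdrift : ∀ z ∉ C, ∫⁻ y, W y ∂(P z) + 1 ≤ W z) {x : 𝓧} (hx : x ∉ C) (n : ℕ) :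
    μ x {ω | (n : ℕ∞) < returnTime C ω}
        + ∫⁻ ω in {ω | ((n + 1 : ℕ) : ℕ∞) < returnTime C ω}, W (ω (n + 1)) ∂μ x
      ≤ ∫⁻ ω in {ω | (n : ℕ∞) < returnTime C ω}, W (ω n) ∂μ x := by
  set A := {ω | (n : ℕ∞) < returnTime C ω}
  have hA : MeasurableSet A := pathFiltration_le n _ (measurableSet_lt_returnTime hC n)
  have hsub : {ω | ((n + 1 : ℕ) : ℕ∞) < returnTime C ω} ⊆ A := fun ω hω =>
    (show (n : ℕ∞) ≤ (n + 1 : ℕ) by exact_mod_cast n.le_succ).trans_lt hω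
  have hnotMem : ∀ᵐ ω ∂μ x, ω ∈ A → ω n ∉ C := by
    filter_upwards [hμ.ae_zero_mem hC.compl hx] with ω h0 hω
    cases n with
    | zero => exact h0
    | succ m => exact lt_returnTime_iff.1 hω _ (by omega) le_rfl
  calc μ x A + ∫⁻ ω in {ω | ((n + 1 : ℕ) : ℕ∞) < returnTime C ω}, W (ω (n + 1)) ∂μ x
      ≤ μ x A + ∫⁻ ω in A, W (ω (n + 1)) ∂μ x := by gcongr
    _ = ∫⁻ ω in A, (∫⁻ y, W y ∂(P (ω n)) + 1) ∂μ x := by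
        rw [hμ.2.2 x n A (measurableSet_lt_returnTime hC n) W hW,
          lintegral_add_right _ measurable_const, setLIntegral_one, add_comm]
    _ ≤ ∫⁻ ω in A, W (ω n) ∂μ x := by
        refine setLIntegral_mono_ae' hA ?_
        filter_upwards [hnotMem] with ω hω hωA using hdrift _ (hω hωA)

theorem lintegral_returnTime_le (hμ : IsMarkovTrajectory P μ) {C : Set 𝓧}
    (hC : MeasurableSet C) {W : 𝓧 → ℝ≥0∞} (hW : Measurable W)
    (hdrift : ∀ z ∉ C, ∫⁻ y, W y ∂(P z) + 1 ≤ W z) {x : 𝓧} (hx : x ∉ C) :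
    ∫⁻ ω, (returnTime C ω : ℝ≥0∞) ∂μ x ≤ W x := by
  set a : ℕ → ℝ≥0∞ := fun n => ∫⁻ ω in {ω | (n : ℕ∞) < returnTime C ω}, W (ω n) ∂μ x
  have htelescope :
      ∀ N, ∑ n ∈ Finset.range N, μ x {ω | (n : ℕ∞) < returnTime C ω} + a N ≤ a 0 := by
    intro N
    induction N with
    | zero => simp
    | succ N ih =>
      rw [Finset.sum_range_succ, add_assoc]
      exact (add_le_add_right (hμ.measure_lt_returnTime_add_le hC hW hdrift hx N) _).trans ih
  have ha0 : a 0 ≤ W x :=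
    calc a 0 ≤ ∫⁻ ω, W (ω 0) ∂μ x := setLIntegral_le_lintegral _ _
      _ ≤ ∫⁻ _, W x ∂μ x := by
          refine lintegral_mono_ae ?_
          filter_upwards [hμ.ae_zero_mem (measurableSet_le hW measurable_const) (le_refl (W x))]
            with ω hω using hω
      _ = W x := by have := hμ.1 x; simp
  rw [lintegral_toENNReal_eq_tsum_measure_lt _
      fun n => pathFiltration_le n _ (measurableSet_lt_returnTime hC n),
    ENNReal.tsum_eq_iSup_nat]
  exact iSup_le fun N => (le_self_add.trans (htelescope N)).trans ha0

end IsMarkovTrajectory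

theorem stmt_3 {𝓧 : Type*} [MeasurableSpace 𝓧]
    (P : ProbabilityTheory.Kernel 𝓧 𝓧) [ProbabilityTheory.IsMarkovKernel P]
    (μ : 𝓧 → Measure (ℕ → 𝓧)) (hμ : IsMarkovTrajectory P μ)
    (V : 𝓧 → ℝ) (hVmeas : Measurable V) (hV1 : ∀ x, 1 ≤ V x)
    (c α b : ℝ) (hα : α ∈ Set.Ioo (0 : ℝ) 1) (hc : 0 < c)
    (C : Set 𝓧) (hC : MeasurableSet C)
    (hPE : ∀ x, ∫⁻ y, ENNReal.ofReal (V y) ∂(P x)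
      ≤ ENNReal.ofReal (V x - c * V x ^ α + C.indicator (fun _ => b) x)) :
    ∀ x ∉ C, ∫⁻ ω, (returnTime C ω : ℝ≥0∞) ∂(μ x)
      ≤ ENNReal.ofReal (V x ^ (1 - α) / (c * (1 - α))) := by
  intro x hx
  refine hμ.lintegral_returnTime_le hC ((hVmeas.pow_const _).div_const _).ennreal_ofReal
    (fun z hz => ?_) hx
  have hdrift : ∫⁻ y, ENNReal.ofReal (V y) ∂(P z) ≤ ENNReal.ofReal (V z - c * V z ^ α) := by
    simpa [indicator_of_notMem hz] using hPE z
  have hVz : c * V z ^ α ≤ V z := by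
    have hone : (1 : ℝ≥0∞) ≤ ENNReal.ofReal (V z - c * V z ^ α) :=
      calc (1 : ℝ≥0∞) = ∫⁻ _, 1 ∂(P z) := by simp
        _ ≤ ∫⁻ y, ENNReal.ofReal (V y) ∂(P z) :=
            lintegral_mono fun y => ENNReal.one_le_ofReal.2 (hV1 y)
        _ ≤ _ := hdrift
    linarith [ENNReal.one_le_ofReal.1 hone]
  exact lintegral_rpow_div_add_one_le (P z) hVmeas (fun y => zero_le_one.trans (hV1 y)) hc hα
    (by linarith [hV1 z]) hVz hdrift
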